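/- arXiv:1012.5498 — 7 statements merged into one kernel-verified Lean document; each statement's English description precedes it below -/
import Mathlib

section
/- Let F be a finite field and G a finite abelian group. If every nontrivial ideal I of the group ring FG (i.e. {0} ⊊ I ⊊ FG) is the annihilator of some single element v ∈ FG, then FG is a principal ideal ring. -/
/-!
The functional "coefficient of `1`" makes `x, y ↦ (x * y) 1` a nondegenerate symmetric pairing
on `FG`, under which the orthogonal of an ideal is its annihilator. Hence `Ann (Ann J) = J` for
every ideal `J`. If `J` is nontrivial then so is `Ann J`, so `Ann J = Ann v = Ann (v)` for some `v`,
and taking annihilators once more gives `J = (v)`.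
-/

open Module
open LinearMap (BilinForm)

def mulPairing {R A : Type*} [CommSemiring R] [Semiring A] [Algebra R A] (φ : Dual R A) :
    BilinForm R A :=
  (LinearMap.mul R A).compr₂ φ

@[simp]
lemma mulPairing_apply {R A : Type*} [CommSemiring R] [Semiring A] [Algebra R A] (φ : Dual R A)
    (x y : A) : mulPairing φ x y = φ (x * y) := rfl

lemma mulPairing_isSymm {R A : Type*} [CommSemiring R] [CommSemiring A] [Algebra R A]
    (φ : Dual R A) : (mulPairing φ).IsSymm :=
  ⟨fun x y => by rw [mulPairing_apply, mulPairing_apply, mul_comm]⟩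

section Annihilator

variable {K A : Type*} [Field K] [CommRing A] [Algebra K A] {φ : Dual K A}

lemma orthogonal_mulPairing_eq_annihilator (hφ : (mulPairing φ).Nondegenerate) (I : Ideal A) :
    (mulPairing φ).orthogonal (I.restrictScalars K) = I.annihilator.restrictScalars K := by
  ext x
  simp only [BilinForm.orthogonal, Submodule.mem_orthogonalBilin_iff,
    Submodule.restrictScalars_mem, Submodule.mem_annihilator, mulPairing_apply, smul_eq_mul]
  refine ⟨fun hx n hn => hφ.1 _ fun y => ?_, fun hx n hn => by rw [mul_comm, hx n hn, map_zero]⟩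
  rw [mulPairing_apply, show x * n * y = n * y * x by ring]
  exact hx _ (I.mul_mem_right y hn)

variable [FiniteDimensional K A]

theorem annihilator_annihilator_of_nondegenerate (hφ : (mulPairing φ).Nondegenerate)
    (I : Ideal A) : I.annihilator.annihilator = I := by
  apply Submodule.restrictScalars_injective K
  rw [← orthogonal_mulPairing_eq_annihilator hφ, ← orthogonal_mulPairing_eq_annihilator hφ]
  exact BilinForm.orthogonal_orthogonal hφ (mulPairing_isSymm φ).isRefl _

theorem isPrincipalIdealRing_of_forall_eq_annihilator (hφ : (mulPairing φ).Nondegenerate)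
    (h : ∀ I : Ideal A, I ≠ ⊥ → I ≠ ⊤ → ∃ v : A, ∀ x : A, x ∈ I ↔ x * v = 0) :
    IsPrincipalIdealRing A := by
  have ann_ann := annihilator_annihilator_of_nondegenerate hφ
  refine ⟨fun J => ?_⟩
  obtain rfl | hJbot := eq_or_ne J ⊥
  · exact bot_isPrincipal
  obtain rfl | hJtop := eq_or_ne J ⊤
  · exact top_isPrincipal
  have hbot : J.annihilator ≠ ⊥ := fun hJ =>
    hJtop <| by rw [← ann_ann J, hJ, Submodule.annihilator_bot]
  have htop : J.annihilator ≠ ⊤ := fun hJ => hJbot (Submodule.annihilator_eq_top_iff.mp hJ)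
  obtain ⟨v, hv⟩ := h _ hbot htop
  have hann : J.annihilator = (Ideal.span {v}).annihilator := by
    ext x
    rw [hv, Submodule.mem_annihilator_span_singleton, smul_eq_mul]
  exact ⟨v, by rw [← ann_ann J, hann, ann_ann]⟩

end Annihilator

lemma MonoidAlgebra.mulPairing_coord_one_nondegenerate (R G : Type*) [CommSemiring R] [Group G] :
    (mulPairing ((MonoidAlgebra.basis G R).coord 1)).Nondegenerate := by
  refine ⟨fun x hx => ?_, fun x hx => ?_⟩
  · ext g
    have hg : (x * single g⁻¹ (1 : R)).coeff 1 = 0 := hx _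
    simpa using hg
  · ext g
    have hg : (single g⁻¹ (1 : R) * x).coeff 1 = 0 := hx _
    simpa using hg

theorem stmt_0_general (F G : Type*) [Field F] [CommGroup G] [Fintype G]
    (h : ∀ I : Ideal (MonoidAlgebra F G), I ≠ ⊥ → I ≠ ⊤ →
      ∃ v : MonoidAlgebra F G, ∀ x : MonoidAlgebra F G, x ∈ I ↔ x * v = 0) :
    IsPrincipalIdealRing (MonoidAlgebra F G) :=
  isPrincipalIdealRing_of_forall_eq_annihilator
    (MonoidAlgebra.mulPairing_coord_one_nondegenerate F G) h

theorem stmt_0 (F G : Type*) [Field F] [Fintype F] [CommGroup G] [Fintype G]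
    (h : ∀ I : Ideal (MonoidAlgebra F G), I ≠ ⊥ → I ≠ ⊤ →
      ∃ v : MonoidAlgebra F G, ∀ x : MonoidAlgebra F G, x ∈ I ↔ x * v = 0) :
    IsPrincipalIdealRing (MonoidAlgebra F G) :=
  stmt_0_general F G h
end

section
/- Let F be a finite field and G a finite abelian group. If the group ring FG is a principal ideal ring, then every nontrivial ideal of FG equals Ann(v) for some element v ∈ FG, i.e. every nontrivial ideal is a checkable code. -/
/-!
In a commutative algebra `R` of finite dimension over a field, multiplication by `g` has image
`(g)` and kernel `Ann g`, so `dim (g) + dim Ann g = dim R`. If `R` is a principal ideal ring,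
write `Ann g = (v)`; then `(g) ⊆ Ann v`, and both have dimension `dim R - dim (v)`, so
`(g) = Ann v`. The group algebra `FG` of a finite abelian group is such an `R`.
-/

open Submodule Module

section

variable (K : Type*) {R : Type*} [Field K] [CommRing R] [Algebra K R]

theorem range_mulLeft_eq_restrictScalars_span_singleton (g : R) :
    LinearMap.range (LinearMap.mulLeft K g) = (R ∙ g).restrictScalars K := by
  ext x
  simp [mem_span_singleton, mul_comm, eq_comm]

theorem ker_mulLeft_eq_restrictScalars_annihilator (g : R) :
    LinearMap.ker (LinearMap.mulLeft K g) = (R ∙ g).annihilator.restrictScalars K := by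
  ext x
  simp [mul_comm]

theorem finrank_span_singleton_add_finrank_annihilator [FiniteDimensional K R] (g : R) :
    finrank K ((R ∙ g).restrictScalars K) + finrank K ((R ∙ g).annihilator.restrictScalars K)
      = finrank K R := by
  rw [← range_mulLeft_eq_restrictScalars_span_singleton,
    ← ker_mulLeft_eq_restrictScalars_annihilator]
  exact LinearMap.finrank_range_add_finrank_ker _

end

theorem span_singleton_eq_annihilator_of_annihilator_eq_span_singleton (K : Type*) {R : Type*}
    [Field K] [CommRing R] [Algebra K R] [FiniteDimensional K R] {g v : R}
    (hv : (R ∙ g).annihilator = R ∙ v) : R ∙ g = (R ∙ v).annihilator := by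
  have hgv : g * v = 0 := by
    have : v ∈ (R ∙ g).annihilator := hv ▸ mem_span_singleton_self v
    rwa [mem_annihilator_span_singleton, smul_eq_mul, mul_comm] at this
  have hle : R ∙ g ≤ (R ∙ v).annihilator := by
    rw [span_singleton_le_iff_mem, mem_annihilator_span_singleton, smul_eq_mul, hgv]
  apply restrictScalars_injective K
  refine eq_of_le_of_finrank_eq hle ?_
  have hdim_g := finrank_span_singleton_add_finrank_annihilator K g
  have hdim_v := finrank_span_singleton_add_finrank_annihilator K v
  rw [hv] at hdim_g
  omega

theorem exists_eq_annihilator_span_singleton (K : Type*) {R : Type*}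
    [Field K] [CommRing R] [Algebra K R] [FiniteDimensional K R] [IsPrincipalIdealRing R]
    (I : Ideal R) : ∃ v : R, I = (R ∙ v).annihilator := by
  obtain ⟨g, rfl⟩ := IsPrincipalIdealRing.principal I
  obtain ⟨v, hv⟩ := IsPrincipalIdealRing.principal (R ∙ g).annihilator
  exact ⟨v, span_singleton_eq_annihilator_of_annihilator_eq_span_singleton K hv⟩

theorem stmt_1_general (F G : Type*) [Field F] [CommGroup G] [Fintype G]
    (h : IsPrincipalIdealRing (MonoidAlgebra F G)) :
    ∀ I : Ideal (MonoidAlgebra F G), I ≠ ⊥ → I ≠ ⊤ →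
      ∃ v : MonoidAlgebra F G, ∀ x : MonoidAlgebra F G, x ∈ I ↔ x * v = 0 := by
  intro I _ _
  obtain ⟨v, rfl⟩ := exists_eq_annihilator_span_singleton F I
  exact ⟨v, fun x => mem_annihilator_span_singleton v x⟩

theorem stmt_1 (F G : Type*) [Field F] [Fintype F] [CommGroup G] [Fintype G]
    (h : IsPrincipalIdealRing (MonoidAlgebra F G)) :
    ∀ I : Ideal (MonoidAlgebra F G), I ≠ ⊥ → I ≠ ⊤ →
      ∃ v : MonoidAlgebra F G, ∀ x : MonoidAlgebra F G, x ∈ I ↔ x * v = 0 :=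
  stmt_1_general F G h
end

section
/- Let F be a finite field and G a finite abelian group, and suppose u, v ∈ FG satisfy FG·u = Ann(v) and FG·v = Ann(u). Then the dual code of FG·u (with respect to the Euclidean inner product on coefficient vectors) equals FG·v^{(-1)}, where v^{(-1)} = Σ_g v_{g^{-1}} g. -/
/-- The annihilator of a single element of the group algebra. -/
def ann {F G : Type*} [Field F] [CommGroup G] (v : MonoidAlgebra F G) :
    Ideal (MonoidAlgebra F G) where
  carrier := {x | x * v = 0}
  add_mem' := by
    intro a b ha hb
    simp only [Set.mem_setOf_eq, add_mul] at *
    rw [ha, hb, add_zero]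
  zero_mem' := by simp
  smul_mem' := by
    intro c x hx
    simp only [Set.mem_setOf_eq, smul_eq_mul] at *
    rw [mul_assoc, hx, mul_zero]

/-- `v^{(-1)} = Σ_g v_{g⁻¹} g`. -/
def inv' {F G : Type*} [Field F] [CommGroup G] (v : MonoidAlgebra F G) :
    MonoidAlgebra F G :=
  MonoidAlgebra.ofCoeff (Finsupp.equivMapDomain (Equiv.inv G) v.coeff)

/-!
The Euclidean form is `⟨a, c⟩ = (a * c^{(-1)})_1`, and `x ↦ x^{(-1)}` is a ring automorphism of
`FG`. Since the identity coefficients of `x * s` for all `s` determine `x`, the element `a` is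
orthogonal to `FG·u` iff `a * u^{(-1)} = 0`, i.e. iff `a^{(-1)} ∈ Ann(u) = FG·v`, i.e. iff
`a ∈ FG·v^{(-1)}`.
-/

theorem MonoidAlgebra.eq_zero_of_forall_coeff_mul_one {R G : Type*} [Semiring R] [Group G]
    (x : MonoidAlgebra R G) (h : ∀ s : MonoidAlgebra R G, (x * s).coeff 1 = 0) : x = 0 := by
  ext g
  simpa using h (single g⁻¹ 1)

section inv'

variable {F G : Type*} [Field F] [CommGroup G]

theorem coeff_inv' (x : MonoidAlgebra F G) (g : G) : (inv' x).coeff g = x.coeff g⁻¹ := rfl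

theorem inv'_eq_domCongr (x : MonoidAlgebra F G) :
    inv' x = MonoidAlgebra.domCongr F F (MulEquiv.inv G) x := by
  ext g
  simp [coeff_inv']

@[simp]
theorem inv'_inv' (x : MonoidAlgebra F G) : inv' (inv' x) = x := by
  ext g
  simp [coeff_inv']

@[simp]
theorem inv'_mul (x y : MonoidAlgebra F G) : inv' (x * y) = inv' x * inv' y := by
  simp only [inv'_eq_domCongr, map_mul]

@[simp]
theorem inv'_eq_zero_iff {x : MonoidAlgebra F G} : inv' x = 0 ↔ x = 0 := by
  simp only [inv'_eq_domCongr, map_eq_zero_iff _ (AlgEquiv.injective _)]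

theorem inv'_mem_span_singleton_iff {a v : MonoidAlgebra F G} :
    inv' a ∈ Ideal.span {v} ↔ a ∈ Ideal.span {inv' v} := by
  simp only [Ideal.mem_span_singleton']
  constructor
  · rintro ⟨c, hc⟩
    exact ⟨inv' c, by rw [← inv'_mul, hc, inv'_inv']⟩
  · rintro ⟨c, rfl⟩
    exact ⟨inv' c, by simp⟩

variable [Fintype G]

theorem sum_coeff_mul_coeff_eq_coeff_mul_inv' (a c : MonoidAlgebra F G) :
    ∑ g : G, a.coeff g * c.coeff g = (a * inv' c).coeff 1 := by
  simp [MonoidAlgebra.coeff_mul_apply_left, coeff_inv', Finsupp.sum_fintype]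

theorem forall_mem_span_singleton_sum_coeff_mul_eq_zero_iff (a u : MonoidAlgebra F G) :
    (∀ c ∈ (Ideal.span {u} : Ideal (MonoidAlgebra F G)), ∑ g : G, a.coeff g * c.coeff g = 0) ↔
      inv' a * u = 0 := by
  have key (e : MonoidAlgebra F G) :
      ∑ g : G, a.coeff g * (u * e).coeff g = (inv' (inv' a * u) * inv' e).coeff 1 := by
    rw [sum_coeff_mul_coeff_eq_coeff_mul_inv', inv'_mul, inv'_mul, inv'_inv', mul_assoc]
  constructor
  · intro h
    rw [← inv'_eq_zero_iff]
    refine MonoidAlgebra.eq_zero_of_forall_coeff_mul_one _ fun s => ?_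
    simpa [key] using h (u * inv' s) (Ideal.mul_mem_right _ _ (Ideal.mem_span_singleton_self u))
  · rintro h c hc
    obtain ⟨e, rfl⟩ := Ideal.mem_span_singleton.1 hc
    rw [key, h]
    simp [inv'_eq_domCongr]

end inv'

theorem stmt_4_general (F G : Type*) [Field F] [CommGroup G] [Fintype G]
    (u v : MonoidAlgebra F G)
    (hv : (Ideal.span {v} : Ideal (MonoidAlgebra F G)) = ann u) :
    {a : MonoidAlgebra F G |
        ∀ c ∈ (Ideal.span {u} : Ideal (MonoidAlgebra F G)), ∑ g : G, a.coeff g * c.coeff g = 0}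
      = ((Ideal.span {inv' v} : Ideal (MonoidAlgebra F G)) : Set (MonoidAlgebra F G)) := by
  ext a
  rw [Set.mem_ofPred_eq, forall_mem_span_singleton_sum_coeff_mul_eq_zero_iff, SetLike.mem_coe,
    ← inv'_mem_span_singleton_iff, hv]
  rfl

theorem stmt_4 (F G : Type*) [Field F] [Fintype F] [CommGroup G] [Fintype G]
    (u v : MonoidAlgebra F G)
    (hu : (Ideal.span {u} : Ideal (MonoidAlgebra F G)) = ann v)
    (hv : (Ideal.span {v} : Ideal (MonoidAlgebra F G)) = ann u) :
    {a : MonoidAlgebra F G |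
        ∀ c ∈ (Ideal.span {u} : Ideal (MonoidAlgebra F G)), ∑ g : G, a.coeff g * c.coeff g = 0}
      = ((Ideal.span {inv' v} : Ideal (MonoidAlgebra F G)) : Set (MonoidAlgebra F G)) :=
  stmt_4_general F G u v hv
end

section
/- Let F be a finite field and G a finite abelian group. For u, v ∈ FG with u·v = 0, every element of the ideal FG·v^{(-1)} is orthogonal (under the Euclidean inner product of coefficient vectors) to every element of FG·u; that is, FG·v^{(-1)} ⊆ (FG·u)^⊥. -/
namespace MonoidAlgebra

variable {F G : Type*} [Field F] [CommGroup G]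

lemma coeff_inv' (v : MonoidAlgebra F G) (g : G) : (inv' v).coeff g = v.coeff g⁻¹ := rfl

lemma inv'_eq_domCongr_inv (v : MonoidAlgebra F G) :
    inv' v = domCongr F F (MulEquiv.inv G) v := by
  ext g
  simp [coeff_inv']

lemma inv'_mul (x y : MonoidAlgebra F G) : inv' (x * y) = inv' x * inv' y := by
  simp only [inv'_eq_domCongr_inv, map_mul]

lemma inv'_zero : inv' (0 : MonoidAlgebra F G) = 0 := by
  simp only [inv'_eq_domCongr_inv, map_zero]

lemma sum_coeff_mul_coeff_eq_coeff_one_mul_inv' [Fintype G] (a c : MonoidAlgebra F G) :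
    ∑ g : G, a.coeff g * c.coeff g = (a * inv' c).coeff 1 := by
  rw [coeff_mul_apply_left, Finsupp.sum_fintype _ _ (fun _ => zero_mul _)]
  simp [coeff_inv']

end MonoidAlgebra

theorem stmt_5_general (F G : Type*) [Field F] [CommGroup G] [Fintype G]
    (u v : MonoidAlgebra F G) (h : u * v = 0) :
    ∀ a ∈ (Ideal.span {inv' v} : Ideal (MonoidAlgebra F G)),
      ∀ c ∈ (Ideal.span {u} : Ideal (MonoidAlgebra F G)), ∑ g : G, a.coeff g * c.coeff g = 0 := by
  intro a ha c hc
  obtain ⟨r, rfl⟩ := Ideal.mem_span_singleton'.mp ha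
  obtain ⟨s, rfl⟩ := Ideal.mem_span_singleton'.mp hc
  have hprod : r * inv' v * inv' (s * u) = r * inv' s * inv' (u * v) := by
    rw [MonoidAlgebra.inv'_mul, MonoidAlgebra.inv'_mul]
    ring
  rw [MonoidAlgebra.sum_coeff_mul_coeff_eq_coeff_one_mul_inv', hprod, h,
    MonoidAlgebra.inv'_zero, mul_zero, MonoidAlgebra.coeff_zero, Finsupp.zero_apply]

theorem stmt_5 (F G : Type*) [Field F] [Fintype F] [CommGroup G] [Fintype G]
    (u v : MonoidAlgebra F G) (h : u * v = 0) :
    ∀ a ∈ (Ideal.span {inv' v} : Ideal (MonoidAlgebra F G)),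
      ∀ c ∈ (Ideal.span {u} : Ideal (MonoidAlgebra F G)), ∑ g : G, a.coeff g * c.coeff g = 0 :=
  stmt_5_general F G u v h
end

section
/- Let R be a finite commutative ring and a ∈ R. Then the set of generators of the principal ideal Ra is exactly U(R)·a, where U(R) is the set of units of R; equivalently, for a, b ∈ R, Ra = Rb if and only if a = f·b for some unit f ∈ R. -/
/-- In a finite monoid, some positive power of any element is idempotent. -/
lemma exists_idem_pow {M : Type*} [Monoid M] [Finite M] (a : M) :
    ∃ k : ℕ, 1 ≤ k ∧ (a ^ k) * (a ^ k) = a ^ k := by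
  obtain ⟨i, j, hne, hij⟩ := Finite.exists_ne_map_eq_of_infinite (fun n : ℕ => a ^ n)
  wlog hlt : i < j generalizing i j
  · exact this j i hne.symm hij.symm (by omega)
  set d := j - i with hd
  have hd1 : 1 ≤ d := by omega
  have hstep : ∀ m, i ≤ m → a ^ (m + d) = a ^ m := by
    intro m hm
    have h0 : a ^ (i + d) = a ^ i := by
      have : i + d = j := by omega
      rw [this]; exact hij.symm
    calc a ^ (m + d) = a ^ (i + d) * a ^ (m - i) := by
            rw [← pow_add]; congr 1; omega
      _ = a ^ i * a ^ (m - i) := by rw [h0]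
      _ = a ^ m := by rw [← pow_add]; congr 1; omega
  have hmult : ∀ t m, i ≤ m → a ^ (m + t * d) = a ^ m := by
    intro t
    induction t with
    | zero => simp
    | succ n ih =>
      intro m hm
      have : m + (n + 1) * d = (m + n * d) + d := by ring
      rw [this, hstep _ (by omega), ih m hm]
  refine ⟨(i + 1) * d, by nlinarith, ?_⟩
  rw [← pow_add]
  exact hmult (i + 1) ((i + 1) * d) (by nlinarith)

lemma assoc_of_mutual {R : Type*} [CommRing R] [Finite R] {a b s t : R}
    (ha : a = s * b) (hb : b = t * a) : ∃ u : Rˣ, a = (u : R) * b := by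
  have hca : (s * t) * a = a := by
    rw [mul_assoc, ← hb, ← ha]
  obtain ⟨k, hk1, hke⟩ := exists_idem_pow (s * t)
  obtain ⟨m, rfl⟩ : ∃ m, k = m + 1 := ⟨k - 1, by omega⟩
  clear hk1
  have hpow : ∀ n : ℕ, (s * t) ^ (n + 1) * a = a := by
    intro n
    induction n with
    | zero => simpa using hca
    | succ p ih =>
      calc (s * t) ^ (p + 2) * a = (s * t) ^ (p + 1) * ((s * t) * a) := by ring
        _ = (s * t) ^ (p + 1) * a := by rw [hca]
        _ = a := ih
  have hea : (s * t) ^ (m + 1) * a = a := hpow m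
  have heb : (s * t) ^ (m + 1) * b = b := by
    rw [hb, ← mul_assoc, mul_comm _ t, mul_assoc, hea]
  refine ⟨⟨(s * t) ^ (m + 1) * s + (1 - (s * t) ^ (m + 1)),
           t * (s * t) ^ m * (s * t) ^ (m + 1) + (1 - (s * t) ^ (m + 1)), ?_, ?_⟩, ?_⟩
  · linear_combination ((s * t) ^ (m + 1) + 2 - s - t * (s * t) ^ m) * hke
  · linear_combination ((s * t) ^ (m + 1) + 2 - s - t * (s * t) ^ m) * hke
  · show a = ((s * t) ^ (m + 1) * s + (1 - (s * t) ^ (m + 1))) * b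
    calc a = s * ((s * t) ^ (m + 1) * b) + b - (s * t) ^ (m + 1) * b := by
            rw [heb, ← ha]; ring
      _ = ((s * t) ^ (m + 1) * s + (1 - (s * t) ^ (m + 1))) * b := by ring

theorem stmt_8 (R : Type*) [CommRing R] [Fintype R] :
    (∀ a : R, {c : R | Ideal.span {c} = Ideal.span {a}}
        = {c : R | ∃ f : Rˣ, c = (f : R) * a}) ∧
    (∀ a b : R, Ideal.span {a} = Ideal.span {b} ↔ ∃ f : Rˣ, a = (f : R) * b) := by
  have key : ∀ a b : R, Ideal.span {a} = Ideal.span {b} ↔ ∃ f : Rˣ, a = (f : R) * b := by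
    intro a b
    constructor
    · intro h
      have h1 : a ∈ Ideal.span ({b} : Set R) := by
        rw [← h]; exact Ideal.mem_span_singleton_self a
      have h2 : b ∈ Ideal.span ({a} : Set R) := by
        rw [h]; exact Ideal.mem_span_singleton_self b
      obtain ⟨s, hs⟩ := Ideal.mem_span_singleton'.mp h1
      obtain ⟨t, ht⟩ := Ideal.mem_span_singleton'.mp h2
      exact assoc_of_mutual hs.symm ht.symm
    · rintro ⟨f, rfl⟩
      apply le_antisymm
      · rw [Ideal.span_singleton_le_span_singleton]
        exact ⟨f, mul_comm _ _⟩
      · rw [Ideal.span_singleton_le_span_singleton]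
        exact ⟨(f⁻¹ : Rˣ), by rw [mul_comm (f : R) b, mul_assoc]; simp⟩
  refine ⟨fun a => ?_, key⟩
  ext c
  simp only [Set.mem_setOf_eq]
  exact key c a
end

section
/- Let F be a finite field and G a finite abelian group, and let u, v ∈ FG satisfy FG·u = Ann(v) and FG·v = Ann(u). Then FG·u^{(-1)} = FG·u if and only if FG·v^{(-1)} = FG·v, where w^{(-1)} = Σ_g w_{g^{-1}} g. -/
section
variable {F G : Type*} [Field F] [CommGroup G]

lemma mem_ann {x w : MonoidAlgebra F G} : x ∈ ann w ↔ x * w = 0 := Iff.rfl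

lemma ann_le_ann_of_dvd {a b : MonoidAlgebra F G} (hab : a ∣ b) : ann a ≤ ann b := by
  obtain ⟨c, rfl⟩ := hab
  intro x hx
  rw [mem_ann, ← mul_assoc, mem_ann.mp hx, zero_mul]

lemma ann_eq_of_span_singleton_eq {a b : MonoidAlgebra F G}
    (h : (Ideal.span {a} : Ideal (MonoidAlgebra F G)) = Ideal.span {b}) : ann a = ann b :=
  le_antisymm (ann_le_ann_of_dvd (Ideal.span_singleton_le_span_singleton.mp h.ge))
    (ann_le_ann_of_dvd (Ideal.span_singleton_le_span_singleton.mp h.le))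

lemma map_ann (e : MonoidAlgebra F G ≃+* MonoidAlgebra F G) (w : MonoidAlgebra F G) :
    (ann w).map e = ann (e w) := by
  ext x
  rw [Ideal.mem_map_of_equiv, mem_ann]
  constructor
  · rintro ⟨y, hy, rfl⟩
    rw [← map_mul, mem_ann.mp hy, map_zero]
  · intro hx
    refine ⟨e.symm x, ?_, e.apply_symm_apply x⟩
    rw [mem_ann, ← e.symm_apply_apply w, ← map_mul, hx, map_zero]

lemma span_singleton_map_eq_of_span_eq_ann (e : MonoidAlgebra F G ≃+* MonoidAlgebra F G)
    {u v : MonoidAlgebra F G} (hv : (Ideal.span {v} : Ideal (MonoidAlgebra F G)) = ann u)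
    (hu : (Ideal.span {e u} : Ideal (MonoidAlgebra F G)) = Ideal.span {u}) :
    (Ideal.span {e v} : Ideal (MonoidAlgebra F G)) = Ideal.span {v} :=
  calc (Ideal.span {e v} : Ideal (MonoidAlgebra F G))
      = (Ideal.span {v}).map e := by rw [Ideal.map_span, Set.image_singleton]
    _ = ann (e u) := by rw [hv, map_ann]
    _ = Ideal.span {v} := by rw [ann_eq_of_span_singleton_eq hu, hv]

noncomputable def invAlgEquiv : MonoidAlgebra F G ≃ₐ[F] MonoidAlgebra F G :=
  MonoidAlgebra.domCongr F F (MulEquiv.inv G)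

lemma inv'_eq_invAlgEquiv (w : MonoidAlgebra F G) : inv' w = invAlgEquiv w := by
  ext g
  simp [invAlgEquiv, inv', Finsupp.equivMapDomain_apply]

end

theorem stmt_11_general (F G : Type*) [Field F] [CommGroup G]
    (u v : MonoidAlgebra F G)
    (hu : (Ideal.span {u} : Ideal (MonoidAlgebra F G)) = ann v)
    (hv : (Ideal.span {v} : Ideal (MonoidAlgebra F G)) = ann u) :
    (Ideal.span {inv' u} : Ideal (MonoidAlgebra F G)) = Ideal.span {u} ↔
      (Ideal.span {inv' v} : Ideal (MonoidAlgebra F G)) = Ideal.span {v} := by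
  simp only [inv'_eq_invAlgEquiv]
  exact ⟨span_singleton_map_eq_of_span_eq_ann invAlgEquiv.toRingEquiv hv,
    span_singleton_map_eq_of_span_eq_ann invAlgEquiv.toRingEquiv hu⟩

theorem stmt_11 (F G : Type*) [Field F] [Fintype F] [CommGroup G] [Fintype G]
    (u v : MonoidAlgebra F G)
    (hu : (Ideal.span {u} : Ideal (MonoidAlgebra F G)) = ann v)
    (hv : (Ideal.span {v} : Ideal (MonoidAlgebra F G)) = ann u) :
    (Ideal.span {inv' u} : Ideal (MonoidAlgebra F G)) = Ideal.span {u} ↔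
      (Ideal.span {inv' v} : Ideal (MonoidAlgebra F G)) = Ideal.span {v} :=
  stmt_11_general F G u v hu hv
end

section
/- Let F be a finite field and G a finite abelian group all of whose Sylow subgroups for the characteristic p of F are cyclic (e.g. p ∤ |G|). Then for every ideal I of FG there exist u, v ∈ FG with I = FG·u, Ann(u) = FG·v, and Ann(v) = FG·u. -/
open MonoidAlgebra

section PrincipalIdeals

variable {R : Type*} [CommRing R]

theorem Ideal.span_singleton_sup_span_singleton_of_isIdempotentElem {e : R}
    (he : IsIdempotentElem e) (t : R) :
    Ideal.span {e} ⊔ Ideal.span {t} = Ideal.span {e + (1 - e) * t} := by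
  have he' : e * e = e := he
  refine le_antisymm (sup_le ?_ ?_) ?_ <;> rw [Ideal.span_singleton_le_iff_mem]
  · exact Ideal.mem_span_singleton'.2 ⟨e, by linear_combination (1 - t) * he'⟩
  · exact Ideal.mem_span_singleton'.2 ⟨1 - e + e * t, by linear_combination (-(1 - t) ^ 2) * he'⟩
  · exact Ideal.add_mem _ (Ideal.mem_sup_left (Ideal.mem_span_singleton_self e))
      (Ideal.mem_sup_right (Ideal.mul_mem_left _ _ (Ideal.mem_span_singleton_self t)))

theorem IsPrincipalIdealRing.of_ker_le_span_of_isNilpotent {S : Type*} [CommRing S]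
    [IsSemisimpleRing S] {f : R →+* S} (hf : Function.Surjective f) {t : R}
    (ht : IsNilpotent t) (hker : RingHom.ker f ≤ Ideal.span {t}) :
    IsPrincipalIdealRing R := by
  refine .of_prime fun P hP => ?_
  have htP : Ideal.span {t} ≤ P := by
    obtain ⟨n, hn⟩ := ht
    exact (Ideal.span_singleton_le_iff_mem P).2 (hP.mem_of_pow_mem n (hn ▸ P.zero_mem))
  have hker_nil : ∀ x ∈ RingHom.ker f, IsNilpotent x := fun x hx => by
    obtain ⟨a, rfl⟩ := Ideal.mem_span_singleton'.1 (hker hx)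
    exact (Commute.all a t).isNilpotent_mul_left ht
  obtain ⟨e₀, he₀, hPe₀⟩ := IsSemisimpleRing.ideal_eq_span_idempotent (P.map f)
  obtain ⟨e, he, rfl⟩ := exists_isIdempotentElem_eq_of_ker_isNilpotent f hker_nil e₀ (hf e₀) he₀
  have hPe : P = Ideal.span {e} ⊔ RingHom.ker f := calc
    P = P ⊔ RingHom.ker f := (sup_eq_left.2 (hker.trans htP)).symm
    _ = (P.map f).comap f := (Ideal.comap_map_of_surjective' f hf P).symm
    _ = ((Ideal.span {e}).map f).comap f := by rw [hPe₀, Ideal.map_span, Set.image_singleton]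
    _ = Ideal.span {e} ⊔ RingHom.ker f := Ideal.comap_map_of_surjective' f hf _
  have hPet : P = Ideal.span {e} ⊔ Ideal.span {t} :=
    le_antisymm (hPe.le.trans (sup_le_sup_left hker _)) (sup_le (hPe ▸ le_sup_left) htP)
  exact ⟨e + (1 - e) * t, by
    rw [hPet, Ideal.span_singleton_sup_span_singleton_of_isIdempotentElem he]⟩

end PrincipalIdeals

section Frobenius

variable {K A : Type*} [Field K]

def IsFrobeniusForm [Ring A] [Algebra K A] (φ : A →ₗ[K] K) : Prop :=
  ∀ x : A, (∀ y, φ (x * y) = 0) → x = 0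

theorem IsFrobeniusForm.annihilator_annihilator [CommRing A] [Algebra K A]
    [FiniteDimensional K A] {φ : A →ₗ[K] K} (hφ : IsFrobeniusForm φ) (I : Ideal A) :
    I.annihilator.annihilator = I := by
  let B : LinearMap.BilinForm K A := (LinearMap.mul K A).compr₂ φ
  have hB : ∀ x y, B x y = φ (x * y) := fun _ _ => rfl
  have hrefl : B.IsRefl := fun x y h => by rwa [hB, mul_comm, ← hB]
  have hnd : B.Nondegenerate :=
    ⟨hφ, fun y h => hφ y fun x => by rw [mul_comm]; exact h x⟩
  have horth : ∀ J : Ideal A,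
      J.annihilator.restrictScalars K = B.orthogonal (J.restrictScalars K) := by
    intro J
    ext x
    simp only [Submodule.restrictScalars_mem, Submodule.mem_annihilator, smul_eq_mul,
      LinearMap.BilinForm.mem_orthogonal_iff, hB]
    refine ⟨fun hx y hy => by rw [mul_comm, hx y hy, map_zero], fun hx y hy => hφ _ fun z => ?_⟩
    rw [show x * y * z = y * z * x by ring]
    exact hx _ (J.mul_mem_right z hy)
  apply Submodule.restrictScalars_injective K
  rw [horth, horth, LinearMap.BilinForm.orthogonal_orthogonal hnd hrefl]

end Frobenius

namespace MonoidAlgebra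

section

variable {R G : Type*}

theorem isFrobeniusForm_coeff_one [Field R] [Group G] :
    IsFrobeniusForm ((Finsupp.lapply 1).comp (coeffLinearEquiv R).toLinearMap : R[G] →ₗ[R] R) := by
  intro x hx
  ext g
  simpa [coeff_mul_single_apply] using hx (single g⁻¹ 1)

theorem mapDomainRingHom_surjective [Semiring R] [Monoid G] {H : Type*} [Monoid H] {f : G →* H}
    (hf : Function.Surjective f) : Function.Surjective (mapDomainRingHom R f) := fun y =>
  let ⟨z, hz⟩ := Finsupp.mapDomain_surjective hf y.coeff
  ⟨ofCoeff z, by ext; simp [mapDomain, hz]⟩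

theorem ker_mapDomainRingHom_mk_le [Ring R] [Group G] {N : Subgroup G} [N.Normal]
    {J : Ideal R[G]} (hJ : ∀ h ∈ N, single h 1 - 1 ∈ J) :
    RingHom.ker (mapDomainRingHom R (QuotientGroup.mk' N)) ≤ J := by
  let s : G → G := fun a => Quotient.out (a : G ⧸ N)
  have hs : ∀ a (r : R), single a r - single (s a) r ∈ J := by
    intro a r
    have hmem : (s a)⁻¹ * a ∈ N := QuotientGroup.eq.1 (QuotientGroup.out_eq' _)
    have : single a r - single (s a) r = single (s a) r * (single ((s a)⁻¹ * a) 1 - 1) := by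
      rw [mul_sub, mul_one, single_mul_single, mul_one, mul_inv_cancel_left]
    rw [this]
    exact J.mul_mem_left _ (hJ _ hmem)
  have hsplit : ∀ x : R[G],
      x - mapDomain Quotient.out (mapDomainRingHom R (QuotientGroup.mk' N) x) ∈ J := by
    intro x
    induction x using induction_linear with
    | zero => simp
    | add x y hx hy => simpa [mapDomain_add, add_sub_add_comm] using J.add_mem hx hy
    | single a r => simpa [mapDomain_single] using hs a r
  intro x hx
  simpa [RingHom.mem_ker.1 hx, mapDomain_zero] using hsplit x

theorem single_sub_one_mem_span_single_sub_one [Ring R] [Group G] {g h : G}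
    (hg : IsOfFinOrder g) (hh : h ∈ Subgroup.zpowers g) :
    single h (1 : R) - 1 ∈ Ideal.span {single g 1 - 1} := by
  obtain ⟨k, rfl⟩ := hg.mem_powers_iff_mem_zpowers.2 hh
  refine Ideal.mem_span_singleton'.2 ⟨∑ i ∈ Finset.range k, single g 1 ^ i, ?_⟩
  rw [geom_sum_mul, single_pow, one_pow]

theorem isNilpotent_single_sub_one [CommRing R] [Monoid G] (p : ℕ) [Fact p.Prime] [CharP R p]
    {g : G} {n : ℕ} (hg : g ^ p ^ n = 1) : IsNilpotent (single g (1 : R) - 1) := by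
  have := charP_of_injective_algebraMap' R (A := R[G]) p
  refine ⟨p ^ n, ?_⟩
  rw [sub_pow_char_pow_of_commute p n (Commute.one_right _), single_pow, one_pow, hg, one_pow,
    ← one_def, sub_self]

end

theorem isPrincipalIdealRing_of_isCyclic_sylow {F G : Type*} [Field F] [CommGroup G] [Finite G]
    (p : ℕ) [Fact p.Prime] [CharP F p] (P : Sylow p G) [IsCyclic P] :
    IsPrincipalIdealRing F[G] := by
  obtain ⟨g, hg⟩ := ((P : Subgroup G).isCyclic_iff_exists_zpowers_eq_top).1 ‹_›
  obtain ⟨n, hn⟩ := P.isPGroup' ⟨g, hg ▸ Subgroup.mem_zpowers g⟩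
  have hgn : g ^ p ^ n = 1 := congrArg Subtype.val hn
  have : NeZero (Nat.card (G ⧸ (P : Subgroup G)) : F) :=
    ⟨(CharP.cast_eq_zero_iff F p _).not.2 P.not_dvd_index⟩
  have hker : RingHom.ker (mapDomainRingHom F (QuotientGroup.mk' (P : Subgroup G))) ≤
      Ideal.span {single g 1 - 1} := ker_mapDomainRingHom_mk_le fun h hh =>
    single_sub_one_mem_span_single_sub_one (isOfFinOrder_of_finite g) (hg ▸ hh)
  exact IsPrincipalIdealRing.of_ker_le_span_of_isNilpotent
    (mapDomainRingHom_surjective (QuotientGroup.mk'_surjective _))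
    (isNilpotent_single_sub_one p hgn) hker

end MonoidAlgebra

theorem ann_eq_annihilator_span {F G : Type*} [Field F] [CommGroup G] (v : F[G]) :
    ann v = (Ideal.span {v}).annihilator := by
  ext x
  rw [Ideal.span, Submodule.mem_annihilator_span_singleton]
  rfl

theorem stmt_19_general (F G : Type*) [Field F] [CommGroup G] [Fintype G]
    (p : ℕ) [Fact p.Prime] [CharP F p]
    (hsyl : ∀ P : Sylow p G, IsCyclic P) :
    ∀ I : Ideal (MonoidAlgebra F G), ∃ u v : MonoidAlgebra F G,
      I = Ideal.span {u} ∧ ann u = Ideal.span {v} ∧ ann v = Ideal.span {u} := by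
  intro I
  have := hsyl default
  have : IsPrincipalIdealRing F[G] := isPrincipalIdealRing_of_isCyclic_sylow p default
  let u := Submodule.IsPrincipal.generator I
  refine ⟨u, Submodule.IsPrincipal.generator (ann u), (Ideal.span_singleton_generator I).symm,
    (Ideal.span_singleton_generator _).symm, ?_⟩
  rw [ann_eq_annihilator_span, Ideal.span_singleton_generator, ann_eq_annihilator_span,
    isFrobeniusForm_coeff_one.annihilator_annihilator]

theorem stmt_19 (F G : Type*) [Field F] [Fintype F] [CommGroup G] [Fintype G]
    (p : ℕ) [Fact p.Prime] [CharP F p]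
    (hsyl : ∀ P : Sylow p G, IsCyclic P) :
    ∀ I : Ideal (MonoidAlgebra F G), ∃ u v : MonoidAlgebra F G,
      I = Ideal.span {u} ∧ ann u = Ideal.span {v} ∧ ann v = Ideal.span {u} :=
  stmt_19_general F G p hsyl
end
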